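/- arXiv:1607.03482 — 2 statements merged into one kernel-verified Lean document; each statement's English description precedes it below -/
import Mathlib

section
/- Let the electromagnetic field have the travelling-wave/static split form E(t,x) = ε⊥(ct − x³) + E_s(x), B(t,x) = k × ε⊥(ct − x³) + B_s(x), with ε⊥ : ℝ → ℝ³ continuous with vanishing third component, E_s, B_s : ℝ³ → ℝ³ continuous, and k = (0,0,1). Let (x,p) be a C¹ solution of the Lorentz equations and let x̂, û, ŝ be its ξ-parametrized variables. Then for all ξ in the range of ξ(t) = ct − x³(t): (ûᵃ)'(ξ) = (q/(mc²))·[(1 + (x̂³)'(ξ))·E_sᵃ(x̂(ξ)) + (x̂'(ξ) × B_s(x̂(ξ)))ᵃ + εᵃ(ξ)] for a = 1,2, and ŝ'(ξ) = −(q/(mc²))·[E_s³(x̂(ξ)) − (x̂¹)'(ξ)E_s¹(x̂(ξ)) − (x̂²)'(ξ)E_s²(x̂(ξ)) + (x̂¹)'(ξ)B_s²(x̂(ξ)) − (x̂²)'(ξ)B_s¹(x̂(ξ))]. In particular, the rapidly varying pump ε⊥ enters the equation for û⊥ only through its value at the independent variable ξ, and does not enter the equation for ŝ at all. -/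
noncomputable section

/-- Squared Euclidean norm on `Fin 3 → ℝ`. -/
def sq3 (v : Fin 3 → ℝ) : ℝ := v 0 ^ 2 + v 1 ^ 2 + v 2 ^ 2

/-- Cross product on `Fin 3 → ℝ`. -/
def cross (a b : Fin 3 → ℝ) : Fin 3 → ℝ :=
  ![a 1 * b 2 - a 2 * b 1, a 2 * b 0 - a 0 * b 2, a 0 * b 1 - a 1 * b 0]

/-- `(x, p)` is a C¹ solution of the Lorentz equations
`p' = qE + (p/√(m²c²+‖p‖²)) × qB`, `x' = c·p/√(m²c²+‖p‖²)`. -/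
def IsLorentzSolution (m c q : ℝ) (E B : ℝ → (Fin 3 → ℝ) → (Fin 3 → ℝ))
    (x p : ℝ → Fin 3 → ℝ) : Prop :=
  ∀ t : ℝ,
    HasDerivAt p
      (q • E t (x t) +
        cross ((Real.sqrt (m ^ 2 * c ^ 2 + sq3 (p t)))⁻¹ • p t) (q • B t (x t))) t ∧
    HasDerivAt x ((c / Real.sqrt (m ^ 2 * c ^ 2 + sq3 (p t))) • p t) t

/-- Position as a function of the light-like coordinate `ξ`. -/
def xhat (x : ℝ → Fin 3 → ℝ) (tinv : ℝ → ℝ) (ξ : ℝ) : Fin 3 → ℝ := x (tinv ξ)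

/-- Dimensionless momentum `u = p/(mc)` as a function of `ξ`. -/
def uhat (m c : ℝ) (p : ℝ → Fin 3 → ℝ) (tinv : ℝ → ℝ) (ξ : ℝ) : Fin 3 → ℝ :=
  (m * c)⁻¹ • p (tinv ξ)

/-- Lorentz factor `γ = √(1+‖u‖²)` as a function of `ξ`. -/
def gammahat (m c : ℝ) (p : ℝ → Fin 3 → ℝ) (tinv : ℝ → ℝ) (ξ : ℝ) : ℝ :=
  Real.sqrt (1 + sq3 (uhat m c p tinv ξ))

/-- Light-like relativistic factor `s = γ − u³` as a function of `ξ`. -/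
def shat (m c : ℝ) (p : ℝ → Fin 3 → ℝ) (tinv : ℝ → ℝ) (ξ : ℝ) : ℝ :=
  gammahat m c p tinv ξ - uhat m c p tinv ξ 2



/-!
Along a solution, `ξ(t) = ct - x³(t)` has derivative `c(1 - β³)`, where `β = v/c` satisfies
`β³ < 1`; by the inverse function theorem `t̂` is differentiable with the reciprocal derivative,
so `ξ`-derivatives are time derivatives divided by `c(1 - β³)`. This gives `x̂' = β/(1 - β³)`,
`û' = (q/mc²) F/(1 - β³)` and `ŝ' = (q/mc²)(β·F - F³)/(1 - β³)` with `F = E + β × B`, the last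
because `γ' = β·u'` and `β·(β × B) = 0`. For the plane-wave part `(ε, k × ε)` the BAC–CAB rule
gives `F = (β·ε) k + (1 - β³) ε`: its transverse part `(1 - β³) ε` cancels the denominator, and
its contribution to `β·F - F³` is `-(1 - β³) ε³ = 0`.
-/

open Matrix

lemma cross_eq_crossProduct (a b : Fin 3 → ℝ) : cross a b = a ⨯₃ b := rfl

lemma cross_smul_right (a b : Fin 3 → ℝ) (r : ℝ) : cross a (r • b) = r • cross a b := by
  simp only [cross_eq_crossProduct, map_smul]

lemma cross_smul_left (a b : Fin 3 → ℝ) (r : ℝ) : cross (r • a) b = r • cross a b := by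
  simp only [cross_eq_crossProduct, map_smul, LinearMap.smul_apply]

lemma HasDerivAt.sq3_comp {u : ℝ → Fin 3 → ℝ} {u' : Fin 3 → ℝ} {t : ℝ} (h : HasDerivAt u u' t) :
    HasDerivAt (fun τ => sq3 (u τ)) (2 * (u t ⬝ᵥ u')) t := by
  have hi := hasDerivAt_pi.1 h
  refine ((((hi 0).fun_pow 2).fun_add ((hi 1).fun_pow 2)).fun_add ((hi 2).fun_pow 2)).congr_deriv ?_
  simp only [dotProduct, Fin.sum_univ_three]
  push_cast
  ring

lemma HasDerivAt.sqrt_one_add_sq3_sub {u : ℝ → Fin 3 → ℝ} {u' : Fin 3 → ℝ} {t : ℝ}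
    (h : HasDerivAt u u' t) :
    HasDerivAt (fun τ => √(1 + sq3 (u τ)) - u τ 2)
      ((√(1 + sq3 (u t)))⁻¹ • u t ⬝ᵥ u' - u' 2) t := by
  have hpos : 0 < 1 + sq3 (u t) := by rw [sq3]; positivity
  refine (((h.sq3_comp.const_add 1).sqrt hpos.ne').fun_sub (hasDerivAt_pi.1 h 2)).congr_deriv ?_
  rw [smul_dotProduct, smul_eq_mul]
  field_simp

/-- `v / c` for a particle of mass `m` and momentum `P`. -/
def velocity (m c : ℝ) (P : Fin 3 → ℝ) : Fin 3 → ℝ := (√(m ^ 2 * c ^ 2 + sq3 P))⁻¹ • P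

lemma sqrt_sq_add_sq3_pos {a : ℝ} (ha : 0 < a) (P : Fin 3 → ℝ) : 0 < √(a + sq3 P) :=
  Real.sqrt_pos.2 (by rw [sq3]; positivity)

lemma velocity_two_lt_one {m c : ℝ} (hm : m ≠ 0) (hc : c ≠ 0) (P : Fin 3 → ℝ) :
    velocity m c P 2 < 1 := by
  have hmc : 0 < m ^ 2 * c ^ 2 := by positivity
  have hlt : P 2 < √(m ^ 2 * c ^ 2 + sq3 P) := by
    calc P 2 ≤ √(P 2 ^ 2) := Real.le_sqrt_of_sq_le le_rfl
      _ < √(m ^ 2 * c ^ 2 + sq3 P) := by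
        apply Real.sqrt_lt_sqrt (sq_nonneg _)
        rw [sq3]
        nlinarith [sq_nonneg (P 0), sq_nonneg (P 1)]
  rw [velocity, Pi.smul_apply, smul_eq_mul, inv_mul_lt_one₀ (sqrt_sq_add_sq3_pos hmc P)]
  exact hlt

lemma velocity_eq_inv_gamma_smul {m c : ℝ} (hm : 0 < m) (hc : 0 < c) (P : Fin 3 → ℝ) :
    velocity m c P = (√(1 + sq3 ((m * c)⁻¹ • P)))⁻¹ • (m * c)⁻¹ • P := by
  have hw := (sqrt_sq_add_sq3_pos (by positivity : 0 < m ^ 2 * c ^ 2) P).ne'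
  have hγ : 1 + sq3 ((m * c)⁻¹ • P) = ((m * c)⁻¹) ^ 2 * (m ^ 2 * c ^ 2 + sq3 P) := by
    simp only [sq3, Pi.smul_apply, smul_eq_mul]
    field_simp
  rw [hγ, Real.sqrt_mul (sq_nonneg _), Real.sqrt_sq (by positivity), smul_smul, velocity]
  congr 1
  field_simp

def lorentzForce (β E B : Fin 3 → ℝ) : Fin 3 → ℝ := E + cross β B

lemma lorentzForce_add (β E₁ E₂ B₁ B₂ : Fin 3 → ℝ) :
    lorentzForce β (E₁ + E₂) (B₁ + B₂) = lorentzForce β E₁ B₁ + lorentzForce β E₂ B₂ := by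
  simp only [lorentzForce, cross_eq_crossProduct, map_add]
  abel

lemma lorentzForce_planeWave (β ε : Fin 3 → ℝ) :
    lorentzForce β ε (cross ![0, 0, 1] ε) = (β ⬝ᵥ ε) • ![0, 0, 1] + (1 - β 2) • ε := by
  have hk : ![0, 0, 1] ⬝ᵥ β = β 2 := by simp [dotProduct, Fin.sum_univ_three]
  rw [lorentzForce, cross_eq_crossProduct, cross_eq_crossProduct, cross_cross_eq_smul_sub_smul', hk,
    sub_smul, one_smul]
  abel

/-- `β ⬝ᵥ F - F 2` drives `γ - u³`; for a transverse plane wave (`ε 2 = 0`) it vanishes. -/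
lemma dotProduct_lorentzForce_planeWave_sub (β ε : Fin 3 → ℝ) :
    β ⬝ᵥ lorentzForce β ε (cross ![0, 0, 1] ε) - lorentzForce β ε (cross ![0, 0, 1] ε) 2 =
      -(1 - β 2) * ε 2 := by
  rw [lorentzForce_planeWave]
  simp only [dotProduct, Fin.sum_univ_three, Pi.add_apply, Pi.smul_apply, smul_eq_mul, cons_val,
    cons_val_zero, cons_val_one, mul_zero, mul_one, zero_add]
  ring

lemma lorentzForce_planeWave_add_transverse (β ε e b : Fin 3 → ℝ) (hβ : β 2 ≠ 1) {a : Fin 3}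
    (ha : a = 0 ∨ a = 1) :
    (1 - β 2)⁻¹ * (lorentzForce β ε (cross ![0, 0, 1] ε) + lorentzForce β e b) a =
      (1 + (1 - β 2)⁻¹ * β 2) * e a + cross ((1 - β 2)⁻¹ • β) b a + ε a := by
  have hβ' : 1 - β 2 ≠ 0 := sub_ne_zero.2 hβ.symm
  rw [lorentzForce_planeWave, cross_smul_left]
  rcases ha with rfl | rfl <;>
  · simp only [lorentzForce, Pi.add_apply, Pi.smul_apply, smul_eq_mul, cons_val_zero,
      cons_val_one, mul_zero, zero_add]
    field_simp
    ring

lemma lorentzForce_planeWave_add_lightFront (β ε e b : Fin 3 → ℝ) (hβ : β 2 ≠ 1)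
    (hε : ε 2 = 0) :
    (1 - β 2)⁻¹ * (β ⬝ᵥ (lorentzForce β ε (cross ![0, 0, 1] ε) + lorentzForce β e b) -
        (lorentzForce β ε (cross ![0, 0, 1] ε) + lorentzForce β e b) 2) =
      -(e 2 - (1 - β 2)⁻¹ * β 0 * e 0 - (1 - β 2)⁻¹ * β 1 * e 1 +
        (1 - β 2)⁻¹ * β 0 * b 1 - (1 - β 2)⁻¹ * β 1 * b 0) := by
  have hβ' : 1 - β 2 ≠ 0 := sub_ne_zero.2 hβ.symm
  rw [dotProduct_add, Pi.add_apply, add_sub_add_comm, dotProduct_lorentzForce_planeWave_sub, hε,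
    mul_zero, zero_add, lorentzForce, dotProduct_add, cross_eq_crossProduct, dot_self_cross]
  simp only [dotProduct, Fin.sum_univ_three, cross_apply, Pi.add_apply, cons_val]
  field_simp
  ring

theorem HasDerivAt.comp_leftInverse {F : Type*} [NormedAddCommGroup F] [NormedSpace ℝ F]
    {f : ℝ → F} {f' : F} {ξ g : ℝ → ℝ} {σ t : ℝ} (hf : HasDerivAt f f' t)
    (hξ : HasStrictDerivAt ξ σ t) (hσ : σ ≠ 0) (hg : ∀ τ, g (ξ τ) = τ) :
    HasDerivAt (fun η => f (g η)) (σ⁻¹ • f') (ξ t) := by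
  have hg' : HasDerivAt g σ⁻¹ (ξ t) :=
    (hξ.to_local_left_inverse hσ (Filter.Eventually.of_forall hg)).hasDerivAt
  rw [← hg t] at hf
  exact hf.scomp (ξ t) hg'

namespace IsLorentzSolution

variable {m c q : ℝ} {E B : ℝ → (Fin 3 → ℝ) → Fin 3 → ℝ} {x p : ℝ → Fin 3 → ℝ}

lemma hasDerivAt_momentum (hsol : IsLorentzSolution m c q E B x p) (t : ℝ) :
    HasDerivAt p (q • lorentzForce (velocity m c (p t)) (E t (x t)) (B t (x t))) t := by
  rw [lorentzForce, smul_add, ← cross_smul_right]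
  exact (hsol t).1

lemma hasDerivAt_position (hsol : IsLorentzSolution m c q E B x p) (t : ℝ) :
    HasDerivAt x (c • velocity m c (p t)) t := by
  rw [velocity, smul_smul, ← div_eq_mul_inv]
  exact (hsol t).2

lemma hasStrictDerivAt_lightFrontTime (hsol : IsLorentzSolution m c q E B x p)
    (hxC : ContDiff ℝ 1 x) (t : ℝ) :
    HasStrictDerivAt (fun τ => c * τ - x τ 2) (c * (1 - velocity m c (p t) 2)) t := by
  have hx := hasStrictDerivAt_pi.1
    (hxC.contDiffAt.hasStrictDerivAt' (hsol.hasDerivAt_position t) one_ne_zero) 2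
  refine (((hasStrictDerivAt_id t).const_mul c).sub hx).congr_deriv ?_
  simp only [Pi.smul_apply, smul_eq_mul]
  ring

variable {tinv : ℝ → ℝ}

lemma hasDerivAt_comp_tinv {F : Type*} [NormedAddCommGroup F] [NormedSpace ℝ F]
    (hsol : IsLorentzSolution m c q E B x p) (hm : 0 < m) (hc : 0 < c) (hxC : ContDiff ℝ 1 x)
    (htinv : ∀ t, tinv (c * t - x t 2) = t) {f : ℝ → F} {f' : F} {t : ℝ}
    (hf : HasDerivAt f f' t) :
    HasDerivAt (fun η => f (tinv η)) ((c * (1 - velocity m c (p t) 2))⁻¹ • f')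
      (c * t - x t 2) :=
  hf.comp_leftInverse (hsol.hasStrictDerivAt_lightFrontTime hxC t)
    (mul_ne_zero hc.ne' (sub_ne_zero.2 (velocity_two_lt_one hm.ne' hc.ne' _).ne')) htinv

lemma hasDerivAt_xhat (hsol : IsLorentzSolution m c q E B x p) (hm : 0 < m) (hc : 0 < c)
    (hxC : ContDiff ℝ 1 x) (htinv : ∀ t, tinv (c * t - x t 2) = t) (t : ℝ) :
    HasDerivAt (xhat x tinv)
      ((1 - velocity m c (p t) 2)⁻¹ • velocity m c (p t)) (c * t - x t 2) := by
  refine (hsol.hasDerivAt_comp_tinv hm hc hxC htinv (hsol.hasDerivAt_position t)).congr_deriv ?_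
  rw [smul_smul]
  congr 1
  field_simp

lemma hasDerivAt_uhat (hsol : IsLorentzSolution m c q E B x p) (hm : 0 < m) (hc : 0 < c)
    (hxC : ContDiff ℝ 1 x) (htinv : ∀ t, tinv (c * t - x t 2) = t) (t : ℝ) :
    HasDerivAt (uhat m c p tinv)
      ((q / (m * c ^ 2) * (1 - velocity m c (p t) 2)⁻¹) •
        lorentzForce (velocity m c (p t)) (E t (x t)) (B t (x t))) (c * t - x t 2) := by
  refine (hsol.hasDerivAt_comp_tinv hm hc hxC htinv
    ((hsol.hasDerivAt_momentum t).const_smul (m * c)⁻¹)).congr_deriv ?_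
  rw [smul_smul, smul_smul]
  congr 1
  field_simp

lemma hasDerivAt_shat (hsol : IsLorentzSolution m c q E B x p) (hm : 0 < m) (hc : 0 < c)
    (hxC : ContDiff ℝ 1 x) (htinv : ∀ t, tinv (c * t - x t 2) = t) (t : ℝ) :
    HasDerivAt (shat m c p tinv)
      (q / (m * c ^ 2) * (1 - velocity m c (p t) 2)⁻¹ *
        (velocity m c (p t) ⬝ᵥ lorentzForce (velocity m c (p t)) (E t (x t)) (B t (x t)) -
          lorentzForce (velocity m c (p t)) (E t (x t)) (B t (x t)) 2)) (c * t - x t 2) := by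
  have hu : HasDerivAt (fun τ => (m * c)⁻¹ • p τ) _ t :=
    (hsol.hasDerivAt_momentum t).const_smul (m * c)⁻¹
  have hs := hu.sqrt_one_add_sq3_sub
  rw [← velocity_eq_inv_gamma_smul hm hc] at hs
  refine (hsol.hasDerivAt_comp_tinv hm hc hxC htinv hs).congr_deriv ?_
  simp only [dotProduct_smul, Pi.smul_apply, smul_eq_mul]
  field_simp

end IsLorentzSolution

theorem stmt_4_general (m c q : ℝ) (hm : 0 < m) (hc : 0 < c)
    (eps : ℝ → Fin 3 → ℝ) (hepsz : ∀ ξ : ℝ, eps ξ 2 = 0)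
    (Es Bs : (Fin 3 → ℝ) → Fin 3 → ℝ)
    (E B : ℝ → (Fin 3 → ℝ) → (Fin 3 → ℝ))
    (hE : ∀ (t : ℝ) (y : Fin 3 → ℝ), E t y = eps (c * t - y 2) + Es y)
    (hB : ∀ (t : ℝ) (y : Fin 3 → ℝ),
      B t y = cross ![0, 0, 1] (eps (c * t - y 2)) + Bs y)
    (x p : ℝ → Fin 3 → ℝ) (hxC : ContDiff ℝ 1 x)
    (hsol : IsLorentzSolution m c q E B x p)
    (tinv : ℝ → ℝ) (htinv : ∀ t : ℝ, tinv (c * t - x t 2) = t) :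
    ∀ t : ℝ,
      (∀ a : Fin 3, a = 0 ∨ a = 1 →
        HasDerivAt (fun η : ℝ => uhat m c p tinv η a)
          ((q / (m * c ^ 2)) *
            ((1 + deriv (fun η : ℝ => xhat x tinv η 2) (c * t - x t 2)) *
                Es (xhat x tinv (c * t - x t 2)) a +
              cross (fun i : Fin 3 => deriv (fun η : ℝ => xhat x tinv η i) (c * t - x t 2))
                (Bs (xhat x tinv (c * t - x t 2))) a +
              eps (c * t - x t 2) a))
          (c * t - x t 2)) ∧
      HasDerivAt (shat m c p tinv)
        (-(q / (m * c ^ 2)) *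
          (Es (xhat x tinv (c * t - x t 2)) 2 -
            deriv (fun η : ℝ => xhat x tinv η 0) (c * t - x t 2) *
              Es (xhat x tinv (c * t - x t 2)) 0 -
            deriv (fun η : ℝ => xhat x tinv η 1) (c * t - x t 2) *
              Es (xhat x tinv (c * t - x t 2)) 1 +
            deriv (fun η : ℝ => xhat x tinv η 0) (c * t - x t 2) *
              Bs (xhat x tinv (c * t - x t 2)) 1 -
            deriv (fun η : ℝ => xhat x tinv η 1) (c * t - x t 2) *
              Bs (xhat x tinv (c * t - x t 2)) 0))
        (c * t - x t 2) := by
  intro t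
  set β := velocity m c (p t)
  have hβ : β 2 ≠ 1 := (velocity_two_lt_one hm.ne' hc.ne' (p t)).ne
  have hxt : xhat x tinv (c * t - x t 2) = x t := by rw [xhat, htinv]
  have hdx (i : Fin 3) : deriv (fun η => xhat x tinv η i) (c * t - x t 2) = (1 - β 2)⁻¹ * β i :=
    (hasDerivAt_pi.1 (hsol.hasDerivAt_xhat hm hc hxC htinv t) i).deriv
  have hF : lorentzForce β (E t (x t)) (B t (x t)) =
      lorentzForce β (eps (c * t - x t 2)) (cross ![0, 0, 1] (eps (c * t - x t 2))) +
        lorentzForce β (Es (x t)) (Bs (x t)) := by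
    rw [hE, hB, lorentzForce_add]
  refine ⟨fun a ha => ?_, ?_⟩
  · refine (hasDerivAt_pi.1 (hsol.hasDerivAt_uhat hm hc hxC htinv t) a).congr_deriv ?_
    rw [Pi.smul_apply, smul_eq_mul, mul_assoc, hF,
      lorentzForce_planeWave_add_transverse _ _ _ _ hβ ha, hxt]
    simp only [hdx]
    rfl
  · refine (hsol.hasDerivAt_shat hm hc hxC htinv t).congr_deriv ?_
    rw [mul_assoc, hF, lorentzForce_planeWave_add_lightFront _ _ _ _ hβ (hepsz _), hxt, hdx, hdx,
      mul_neg, neg_mul]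

/-- For a travelling-wave/static split field
`E = ε⊥(ct−z) + E_s(x)`, `B = k×ε⊥(ct−z) + B_s(x)`, the ξ-parametrized
momentum equations read
`(ûᵃ)'(ξ) = (q/(mc²))[(1+(x̂³)')E_sᵃ(x̂) + (x̂'×B_s(x̂))ᵃ + εᵃ(ξ)]` (a = 1,2) and
`ŝ'(ξ) = −(q/(mc²))[E_s³(x̂) − (x̂¹)'E_s¹(x̂) − (x̂²)'E_s²(x̂)
  + (x̂¹)'B_s²(x̂) − (x̂²)'B_s¹(x̂)]`;
the pump `ε⊥` enters only through its value at `ξ`. -/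
theorem stmt_4 (m c q : ℝ) (hm : 0 < m) (hc : 0 < c)
    (eps : ℝ → Fin 3 → ℝ) (heps : Continuous eps) (hepsz : ∀ ξ : ℝ, eps ξ 2 = 0)
    (Es Bs : (Fin 3 → ℝ) → Fin 3 → ℝ) (hEs : Continuous Es) (hBs : Continuous Bs)
    (E B : ℝ → (Fin 3 → ℝ) → (Fin 3 → ℝ))
    (hE : ∀ (t : ℝ) (y : Fin 3 → ℝ), E t y = eps (c * t - y 2) + Es y)
    (hB : ∀ (t : ℝ) (y : Fin 3 → ℝ),
      B t y = cross ![0, 0, 1] (eps (c * t - y 2)) + Bs y)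
    (x p : ℝ → Fin 3 → ℝ) (hxC : ContDiff ℝ 1 x) (hpC : ContDiff ℝ 1 p)
    (hsol : IsLorentzSolution m c q E B x p)
    (tinv : ℝ → ℝ) (htinv : ∀ t : ℝ, tinv (c * t - x t 2) = t) :
    ∀ t : ℝ,
      (∀ a : Fin 3, a = 0 ∨ a = 1 →
        HasDerivAt (fun η : ℝ => uhat m c p tinv η a)
          ((q / (m * c ^ 2)) *
            ((1 + deriv (fun η : ℝ => xhat x tinv η 2) (c * t - x t 2)) *
                Es (xhat x tinv (c * t - x t 2)) a +
              cross (fun i : Fin 3 => deriv (fun η : ℝ => xhat x tinv η i) (c * t - x t 2))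
                (Bs (xhat x tinv (c * t - x t 2))) a +
              eps (c * t - x t 2) a))
          (c * t - x t 2)) ∧
      HasDerivAt (shat m c p tinv)
        (-(q / (m * c ^ 2)) *
          (Es (xhat x tinv (c * t - x t 2)) 2 -
            deriv (fun η : ℝ => xhat x tinv η 0) (c * t - x t 2) *
              Es (xhat x tinv (c * t - x t 2)) 0 -
            deriv (fun η : ℝ => xhat x tinv η 1) (c * t - x t 2) *
              Es (xhat x tinv (c * t - x t 2)) 1 +
            deriv (fun η : ℝ => xhat x tinv η 0) (c * t - x t 2) *
              Bs (xhat x tinv (c * t - x t 2)) 1 -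
            deriv (fun η : ℝ => xhat x tinv η 1) (c * t - x t 2) *
              Bs (xhat x tinv (c * t - x t 2)) 0))
        (c * t - x t 2) :=
  stmt_4_general m c q hm hc eps hepsz Es Bs E B hE hB x p hxC hsol tinv htinv
end
end

section
/- Let the electromagnetic field be E(t,x) = ε⊥(ct − x³) + E_s³(x³)·k, B(t,x) = k × ε⊥(ct − x³), where ε⊥ : ℝ → ℝ³ is continuous, integrable, with vanishing third component, E_s³ : ℝ → ℝ is continuous, and k = (0,0,1); set α⊥(ξ) := −∫_{−∞}^{ξ} ε⊥(ζ)dζ. Let (x,p) be a C¹ solution of the Lorentz equations with ξ-parametrized variables x̂, û, ŝ defined on J = range of ξ(t) = ct − x³(t), and fix ξ₀ ∈ J; define K⊥ := (mc²/q)·û⊥(ξ₀) + α⊥(ξ₀) (for q ≠ 0) and v̂(ξ) := ‖(q/(mc²))·(K⊥ − α⊥(ξ))‖². Then for all ξ ∈ J: ûᵃ(ξ) = (q/(mc²))·(Kᵃ − αᵃ(ξ)) for a = 1,2, and the pair (ẑ, ŝ) := (x̂³, ŝ) satisfies the one-degree-of-freedom system ẑ'(ξ) = (1 + v̂(ξ))/(2ŝ(ξ)²)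 − 1/2 and mc²·ŝ'(ξ) = −q·E_s³(ẑ(ξ)). -/
noncomputable section

/-!
The fields depend on `t` and `x` only through `ξ = ct − x³` and `x³`. Hence the transverse
equations read `d/dt (c p⊥) = −q d/dt α⊥(ξ(t))`, so the canonical momentum `c p⊥ + q α⊥(ξ)` is
conserved, and the light-front energy `c (p⁰ − p³) = mc² ŝ` changes only through the
longitudinal field: its `t`-derivative is `−q E_s³(x³) ξ'(t)`. Since
`ξ' = c (1 − p³/p⁰) > 0`, the inverse function theorem turns `t`-derivatives into
`ξ`-derivatives by dividing by `ξ'`; this gives `ẑ' = p³/(p⁰ − p³)`, which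
`(p⁰)² = m²c² + ‖p‖²` rewrites in terms of `v̂` and `ŝ`.
-/

open MeasureTheory

theorem hasDerivAt_integral_Iic {E : Type*} [NormedAddCommGroup E] [NormedSpace ℝ E]
    [CompleteSpace E] {f : ℝ → E} (hf : Continuous f) (hfi : Integrable f) (ξ : ℝ) :
    HasDerivAt (fun η => ∫ ζ in Set.Iic η, f ζ) (f ξ) ξ := by
  have hsplit : (fun η => ∫ ζ in Set.Iic η, f ζ)
      = fun η => (∫ ζ in Set.Iic 0, f ζ) + ∫ ζ in 0..η, f ζ := by
    funext η
    rw [← intervalIntegral.integral_Iic_sub_Iic hfi.integrableOn hfi.integrableOn]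
    abel
  rw [hsplit]
  exact (hf.integral_hasStrictDerivAt 0 ξ).hasDerivAt.const_add _

theorem HasStrictDerivAt.hasDerivAt_comp_leftInverse {φ ψ g : ℝ → ℝ} {φ' g' t : ℝ}
    (hφ : HasStrictDerivAt φ φ' t) (hφ' : φ' ≠ 0) (hψ : ∀ s, ψ (φ s) = s)
    (hg : HasDerivAt g g' t) : HasDerivAt (g ∘ ψ) (g' / φ') (φ t) := by
  have hψ' : HasDerivAt ψ φ'⁻¹ (φ t) :=
    (hφ.to_local_left_inverse hφ' (Filter.Eventually.of_forall hψ)).hasDerivAt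
  rw [div_eq_mul_inv]
  exact HasDerivAt.comp (φ t) (by rwa [hψ t]) hψ'

theorem sq3_nonneg (w : Fin 3 → ℝ) : 0 ≤ sq3 w := by
  unfold sq3; positivity

theorem hasDerivAt_sq3 {w : ℝ → Fin 3 → ℝ} {w' : Fin 3 → ℝ} {t : ℝ} (hw : HasDerivAt w w' t) :
    HasDerivAt (fun s => sq3 (w s)) (2 * (w t 0 * w' 0 + w t 1 * w' 1 + w t 2 * w' 2)) t := by
  have hi : ∀ i, HasDerivAt (fun s => w s i) (w' i) t := hasDerivAt_pi.1 hw
  refine ((((hi 0).fun_pow 2).add ((hi 1).fun_pow 2)).add ((hi 2).fun_pow 2)).congr_deriv ?_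
  norm_num
  ring

/-- The time component `p⁰ = γmc` of the four-momentum with spatial part `w`. -/
def timeMomentum (m c : ℝ) (w : Fin 3 → ℝ) : ℝ := √(m ^ 2 * c ^ 2 + sq3 w)

section TimeMomentum

variable {m c : ℝ}

theorem sq_timeMomentum (w : Fin 3 → ℝ) :
    timeMomentum m c w ^ 2 = m ^ 2 * c ^ 2 + sq3 w :=
  Real.sq_sqrt (by have := sq3_nonneg w; positivity)

theorem lt_timeMomentum (hm : 0 < m) (hc : 0 < c) (w : Fin 3 → ℝ) :
    w 2 < timeMomentum m c w := by
  refine (le_abs_self _).trans_lt ?_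
  rw [← Real.sqrt_sq_eq_abs]
  apply Real.sqrt_lt_sqrt (sq_nonneg _)
  unfold sq3
  nlinarith [sq_nonneg (w 0), sq_nonneg (w 1), mul_pos (pow_pos hm 2) (pow_pos hc 2)]

theorem timeMomentum_pos (hm : 0 < m) (hc : 0 < c) (w : Fin 3 → ℝ) : 0 < timeMomentum m c w :=
  Real.sqrt_pos.2 (by have := sq3_nonneg w; positivity)

theorem hasDerivAt_timeMomentum (hm : 0 < m) (hc : 0 < c) {w : ℝ → Fin 3 → ℝ}
    {w' : Fin 3 → ℝ} {t : ℝ} (hw : HasDerivAt w w' t) :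
    HasDerivAt (fun s => timeMomentum m c (w s))
      ((w t 0 * w' 0 + w t 1 * w' 1 + w t 2 * w' 2) / timeMomentum m c (w t)) t := by
  have hT := (timeMomentum_pos hm hc (w t)).ne'
  refine (((hasDerivAt_sq3 hw).const_add (m ^ 2 * c ^ 2)).sqrt
    (by have := sq3_nonneg (w t); positivity)).congr_deriv ?_
  rw [← timeMomentum]
  field_simp

theorem mul_shat (hm : 0 < m) (hc : 0 < c) (p : ℝ → Fin 3 → ℝ) (tinv : ℝ → ℝ) (η : ℝ) :
    m * c * shat m c p tinv η = timeMomentum m c (p (tinv η)) - p (tinv η) 2 := by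
  have hmc : 0 < m * c := mul_pos hm hc
  have h : 1 + sq3 ((m * c)⁻¹ • p (tinv η))
      = (m * c)⁻¹ ^ 2 * (m ^ 2 * c ^ 2 + sq3 (p (tinv η))) := by
    simp only [sq3, Pi.smul_apply, smul_eq_mul]
    field_simp
  rw [shat, gammahat, uhat, h, Real.sqrt_mul (by positivity), Real.sqrt_sq (by positivity)]
  simp only [timeMomentum, Pi.smul_apply, smul_eq_mul]
  field_simp

theorem mul_one_sub_div_timeMomentum_pos (hm : 0 < m) (hc : 0 < c) (w : Fin 3 → ℝ) :
    0 < c * (1 - w 2 / timeMomentum m c w) :=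
  mul_pos hc (sub_pos.2 ((div_lt_one (timeMomentum_pos hm hc w)).2 (lt_timeMomentum hm hc w)))

end TimeMomentum

section PlaneWaveForce

variable (q r e : ℝ) (w ε : Fin 3 → ℝ)

theorem planeWaveForce_apply_perp (hε : ε 2 = 0) {a : Fin 3} (ha : a = 0 ∨ a = 1) :
    (q • (ε + e • ![0, 0, 1]) + cross (r • w) (q • cross ![0, 0, 1] ε) : Fin 3 → ℝ) a
      = q * ε a * (1 - r * w 2) := by
  rcases ha with rfl | rfl <;>
    simp only [cross, Pi.add_apply, Pi.smul_apply, smul_eq_mul, Matrix.cons_val_zero,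
      Matrix.cons_val_one, Matrix.cons_val_two, Matrix.head_cons, Matrix.tail_cons, hε] <;> ring

theorem planeWaveForce_apply_two (hε : ε 2 = 0) :
    (q • (ε + e • ![0, 0, 1]) + cross (r • w) (q • cross ![0, 0, 1] ε) : Fin 3 → ℝ) 2
      = q * e + r * q * (w 0 * ε 0 + w 1 * ε 1) := by
  simp only [cross, Pi.add_apply, Pi.smul_apply, smul_eq_mul, Matrix.cons_val_zero,
      Matrix.cons_val_one, Matrix.cons_val_two, Matrix.head_cons, Matrix.tail_cons, hε]
  ring

end PlaneWaveForce

theorem lightFront_velocity_eq {k T a b w : ℝ} (hk : k ≠ 0)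
    (hT : T ^ 2 = k ^ 2 + (a ^ 2 + b ^ 2 + w ^ 2)) (hw : T - w ≠ 0) :
    (1 + ((k⁻¹ * a) ^ 2 + (k⁻¹ * b) ^ 2)) / (2 * (k⁻¹ * (T - w)) ^ 2) - 1 / 2 = w / (T - w) := by
  field_simp
  linear_combination -hT

section PlaneWaveMotion

variable {m c q : ℝ} {eps : ℝ → Fin 3 → ℝ} {Es3 : ℝ → ℝ}
  {E B : ℝ → (Fin 3 → ℝ) → (Fin 3 → ℝ)} {x p : ℝ → Fin 3 → ℝ}

theorem IsLorentzSolution.hasDerivAt_momentum_perp (hsol : IsLorentzSolution m c q E B x p)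
    (hE : ∀ t y, E t y = eps (c * t - y 2) + Es3 (y 2) • ![0, 0, 1])
    (hB : ∀ t y, B t y = cross ![0, 0, 1] (eps (c * t - y 2)))
    (hepsz : ∀ ξ, eps ξ 2 = 0) {a : Fin 3} (ha : a = 0 ∨ a = 1) (t : ℝ) :
    HasDerivAt (fun s => p s a)
      (q * eps (c * t - x t 2) a * (1 - p t 2 / timeMomentum m c (p t))) t := by
  have h := hasDerivAt_pi.1 (hsol t).1 a
  rwa [hE, hB, planeWaveForce_apply_perp _ _ _ _ _ (hepsz _) ha, inv_mul_eq_div] at h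

theorem IsLorentzSolution.hasDerivAt_momentum_two (hsol : IsLorentzSolution m c q E B x p)
    (hE : ∀ t y, E t y = eps (c * t - y 2) + Es3 (y 2) • ![0, 0, 1])
    (hB : ∀ t y, B t y = cross ![0, 0, 1] (eps (c * t - y 2)))
    (hepsz : ∀ ξ, eps ξ 2 = 0) (t : ℝ) :
    HasDerivAt (fun s => p s 2)
      (q * Es3 (x t 2) + q * (p t 0 * eps (c * t - x t 2) 0 + p t 1 * eps (c * t - x t 2) 1)
        / timeMomentum m c (p t)) t := by
  have h := hasDerivAt_pi.1 (hsol t).1 2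
  rw [hE, hB, planeWaveForce_apply_two _ _ _ _ _ (hepsz _)] at h
  exact h.congr_deriv (by rw [timeMomentum]; ring)

theorem IsLorentzSolution.hasDerivAt_position_s8 (hsol : IsLorentzSolution m c q E B x p)
    (i : Fin 3) (t : ℝ) :
    HasDerivAt (fun s => x s i) (c / timeMomentum m c (p t) * p t i) t :=
  hasDerivAt_pi.1 (hsol t).2 i

theorem IsLorentzSolution.hasStrictDerivAt_lightFront (hsol : IsLorentzSolution m c q E B x p)
    (hxC : ContDiff ℝ 1 x) (t : ℝ) :
    HasStrictDerivAt (fun s => c * s - x s 2) (c * (1 - p t 2 / timeMomentum m c (p t))) t := by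
  have hC : ContDiff ℝ 1 (fun s => c * s - x s 2) :=
    (contDiff_const.mul contDiff_id).sub ((contDiff_apply ℝ ℝ 2).comp hxC)
  refine hC.contDiffAt.hasStrictDerivAt' ?_ one_ne_zero
  exact (((hasDerivAt_id t).const_mul c).sub (hsol.hasDerivAt_position_s8 2 t)).congr_deriv
    (by ring)

theorem IsLorentzSolution.momentum_perp_add_alpha_eq (hsol : IsLorentzSolution m c q E B x p)
    (hE : ∀ t y, E t y = eps (c * t - y 2) + Es3 (y 2) • ![0, 0, 1])
    (hB : ∀ t y, B t y = cross ![0, 0, 1] (eps (c * t - y 2)))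
    (hepsz : ∀ ξ, eps ξ 2 = 0) (hxC : ContDiff ℝ 1 x) {alpha : ℝ → Fin 3 → ℝ}
    (halpha : ∀ ξ, HasDerivAt alpha (-eps ξ) ξ) {a : Fin 3} (ha : a = 0 ∨ a = 1) (t t₀ : ℝ) :
    c * p t a + q * alpha (c * t - x t 2) a = c * p t₀ a + q * alpha (c * t₀ - x t₀ 2) a := by
  have hderiv : ∀ s, HasDerivAt (fun s => c * p s a + q * alpha (c * s - x s 2) a) 0 s := by
    intro s
    have hα := (hasDerivAt_pi.1 (halpha (c * s - x s 2)) a).comp s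
      (hsol.hasStrictDerivAt_lightFront hxC s).hasDerivAt
    exact (((hsol.hasDerivAt_momentum_perp hE hB hepsz ha s).const_mul c).add
      (hα.const_mul q)).congr_deriv (by simp only [Pi.neg_apply]; ring)
  exact is_const_of_deriv_eq_zero (fun s => (hderiv s).differentiableAt)
    (fun s => (hderiv s).deriv) t t₀

theorem IsLorentzSolution.hasDerivAt_lightFrontEnergy (hsol : IsLorentzSolution m c q E B x p)
    (hE : ∀ t y, E t y = eps (c * t - y 2) + Es3 (y 2) • ![0, 0, 1])
    (hB : ∀ t y, B t y = cross ![0, 0, 1] (eps (c * t - y 2)))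
    (hepsz : ∀ ξ, eps ξ 2 = 0) (hm : 0 < m) (hc : 0 < c) (t : ℝ) :
    HasDerivAt (fun s => c * (timeMomentum m c (p s) - p s 2))
      (-(q * Es3 (x t 2)) * (c * (1 - p t 2 / timeMomentum m c (p t)))) t := by
  have hT := hasDerivAt_timeMomentum hm hc (hsol t).1
  rw [hE, hB, planeWaveForce_apply_perp _ _ _ _ _ (hepsz _) (Or.inl rfl),
    planeWaveForce_apply_perp _ _ _ _ _ (hepsz _) (Or.inr rfl),
    planeWaveForce_apply_two _ _ _ _ _ (hepsz _), ← timeMomentum] at hT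
  exact ((hT.sub (hsol.hasDerivAt_momentum_two hE hB hepsz t)).const_mul c).congr_deriv
    (by ring)

theorem IsLorentzSolution.hasDerivAt_xhat_two (hsol : IsLorentzSolution m c q E B x p)
    (hxC : ContDiff ℝ 1 x) (hm : 0 < m) (hc : 0 < c) {tinv : ℝ → ℝ}
    (htinv : ∀ t, tinv (c * t - x t 2) = t) (t : ℝ) :
    HasDerivAt (fun η => xhat x tinv η 2) (p t 2 / (timeMomentum m c (p t) - p t 2))
      (c * t - x t 2) := by
  have hT := (timeMomentum_pos hm hc (p t)).ne'
  have hgap := (sub_pos.2 (lt_timeMomentum hm hc (p t))).ne'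
  exact ((hsol.hasStrictDerivAt_lightFront hxC t).hasDerivAt_comp_leftInverse
    (mul_one_sub_div_timeMomentum_pos hm hc (p t)).ne' htinv
    (hsol.hasDerivAt_position_s8 2 t)).congr_deriv (by field_simp)

theorem IsLorentzSolution.hasDerivAt_mul_shat (hsol : IsLorentzSolution m c q E B x p)
    (hE : ∀ t y, E t y = eps (c * t - y 2) + Es3 (y 2) • ![0, 0, 1])
    (hB : ∀ t y, B t y = cross ![0, 0, 1] (eps (c * t - y 2)))
    (hepsz : ∀ ξ, eps ξ 2 = 0) (hxC : ContDiff ℝ 1 x) (hm : 0 < m) (hc : 0 < c)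
    {tinv : ℝ → ℝ} (htinv : ∀ t, tinv (c * t - x t 2) = t) (t : ℝ) :
    HasDerivAt (fun η => m * c ^ 2 * shat m c p tinv η)
      (-(q * Es3 (xhat x tinv (c * t - x t 2) 2))) (c * t - x t 2) := by
  have hfun : (fun η => m * c ^ 2 * shat m c p tinv η)
      = (fun s => c * (timeMomentum m c (p s) - p s 2)) ∘ tinv := by
    funext η
    rw [Function.comp_apply, ← mul_shat hm hc]
    ring
  rw [hfun, xhat, htinv]
  exact ((hsol.hasStrictDerivAt_lightFront hxC t).hasDerivAt_comp_leftInverse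
    (mul_one_sub_div_timeMomentum_pos hm hc (p t)).ne' htinv
    (hsol.hasDerivAt_lightFrontEnergy hE hB hepsz hm hc t)).congr_deriv
    (mul_div_cancel_right₀ _ (mul_one_sub_div_timeMomentum_pos hm hc (p t)).ne')

end PlaneWaveMotion

theorem stmt_8_general (m c q : ℝ) (hm : 0 < m) (hc : 0 < c) (hq : q ≠ 0)
    (eps : ℝ → Fin 3 → ℝ) (heps : Continuous eps) (hepsi : Integrable eps)
    (hepsz : ∀ ξ : ℝ, eps ξ 2 = 0)
    (Es3 : ℝ → ℝ)
    (E B : ℝ → (Fin 3 → ℝ) → (Fin 3 → ℝ))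
    (hE : ∀ (t : ℝ) (y : Fin 3 → ℝ),
      E t y = eps (c * t - y 2) + Es3 (y 2) • ![0, 0, 1])
    (hB : ∀ (t : ℝ) (y : Fin 3 → ℝ),
      B t y = cross ![0, 0, 1] (eps (c * t - y 2)))
    (x p : ℝ → Fin 3 → ℝ) (hxC : ContDiff ℝ 1 x)
    (hsol : IsLorentzSolution m c q E B x p)
    (tinv : ℝ → ℝ) (htinv : ∀ t : ℝ, tinv (c * t - x t 2) = t)
    (alpha : ℝ → Fin 3 → ℝ)
    (halpha : ∀ ξ : ℝ, alpha ξ = -∫ ζ in Set.Iic ξ, eps ζ)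
    (t₀ : ℝ) (K : Fin 3 → ℝ)
    (hK : ∀ a : Fin 3,
      K a = (m * c ^ 2 / q) * uhat m c p tinv (c * t₀ - x t₀ 2) a +
        alpha (c * t₀ - x t₀ 2) a)
    (v : ℝ → ℝ)
    (hv : ∀ ξ : ℝ,
      v ξ = ((q / (m * c ^ 2)) * (K 0 - alpha ξ 0)) ^ 2 +
        ((q / (m * c ^ 2)) * (K 1 - alpha ξ 1)) ^ 2) :
    ∀ t : ℝ,
      (∀ a : Fin 3, a = 0 ∨ a = 1 →
        uhat m c p tinv (c * t - x t 2) a =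
          (q / (m * c ^ 2)) * (K a - alpha (c * t - x t 2) a)) ∧
      HasDerivAt (fun η : ℝ => xhat x tinv η 2)
        ((1 + v (c * t - x t 2)) / (2 * (shat m c p tinv (c * t - x t 2)) ^ 2) - 1 / 2)
        (c * t - x t 2) ∧
      HasDerivAt (fun η : ℝ => m * c ^ 2 * shat m c p tinv η)
        (-(q * Es3 (xhat x tinv (c * t - x t 2) 2)))
        (c * t - x t 2) := by
  have hα : ∀ ξ, HasDerivAt alpha (-eps ξ) ξ := fun ξ => by
    rw [show alpha = fun η => -∫ ζ in Set.Iic η, eps ζ from funext halpha]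
    exact (hasDerivAt_integral_Iic heps hepsi ξ).neg
  have huhat : ∀ t a, uhat m c p tinv (c * t - x t 2) a = (m * c)⁻¹ * p t a := fun t a => by
    rw [uhat, htinv, Pi.smul_apply, smul_eq_mul]
  intro t
  have hperp : ∀ a : Fin 3, a = 0 ∨ a = 1 →
      (m * c)⁻¹ * p t a = q / (m * c ^ 2) * (K a - alpha (c * t - x t 2) a) := by
    intro a ha
    rw [hK, huhat]
    field_simp
    linear_combination hsol.momentum_perp_add_alpha_eq hE hB hepsz hxC hα ha t t₀
  have hshat :
      shat m c p tinv (c * t - x t 2) = (m * c)⁻¹ * (timeMomentum m c (p t) - p t 2) := by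
    rw [eq_inv_mul_iff_mul_eq₀ (mul_pos hm hc).ne', mul_shat hm hc, htinv]
  refine ⟨fun a ha => (huhat t a).trans (hperp a ha), ?_,
    hsol.hasDerivAt_mul_shat hE hB hepsz hxC hm hc htinv t⟩
  rw [hv, ← hperp 0 (Or.inl rfl), ← hperp 1 (Or.inr rfl), hshat,
    lightFront_velocity_eq (mul_pos hm hc).ne' (by rw [sq_timeMomentum, sq3]; ring)
      (sub_pos.2 (lt_timeMomentum hm hc (p t))).ne']
  exact hsol.hasDerivAt_xhat_two hxC hm hc htinv t

/-- For `E = ε⊥(ct−z) + E_s³(z)k`, `B = k×ε⊥(ct−z)`, with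
`α⊥(ξ) = −∫_{−∞}^ξ ε⊥`, `K⊥ = (mc²/q)û⊥(ξ₀) + α⊥(ξ₀)` and
`v̂(ξ) = ‖(q/(mc²))(K⊥ − α⊥(ξ))‖²`, one has `ûᵃ(ξ) = (q/(mc²))(Kᵃ − αᵃ(ξ))`
(a = 1,2) and the pair `(ẑ, ŝ) = (x̂³, ŝ)` satisfies the one-degree-of-freedom
system `ẑ' = (1+v̂)/(2ŝ²) − 1/2`, `mc²ŝ' = −qE_s³(ẑ)`. -/
theorem stmt_8 (m c q : ℝ) (hm : 0 < m) (hc : 0 < c) (hq : q ≠ 0)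
    (eps : ℝ → Fin 3 → ℝ) (heps : Continuous eps) (hepsi : Integrable eps)
    (hepsz : ∀ ξ : ℝ, eps ξ 2 = 0)
    (Es3 : ℝ → ℝ) (hEs3 : Continuous Es3)
    (E B : ℝ → (Fin 3 → ℝ) → (Fin 3 → ℝ))
    (hE : ∀ (t : ℝ) (y : Fin 3 → ℝ),
      E t y = eps (c * t - y 2) + Es3 (y 2) • ![0, 0, 1])
    (hB : ∀ (t : ℝ) (y : Fin 3 → ℝ),
      B t y = cross ![0, 0, 1] (eps (c * t - y 2)))
    (x p : ℝ → Fin 3 → ℝ) (hxC : ContDiff ℝ 1 x) (hpC : ContDiff ℝ 1 p)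
    (hsol : IsLorentzSolution m c q E B x p)
    (tinv : ℝ → ℝ) (htinv : ∀ t : ℝ, tinv (c * t - x t 2) = t)
    (alpha : ℝ → Fin 3 → ℝ)
    (halpha : ∀ ξ : ℝ, alpha ξ = -∫ ζ in Set.Iic ξ, eps ζ)
    (t₀ : ℝ) (K : Fin 3 → ℝ)
    (hK : ∀ a : Fin 3,
      K a = (m * c ^ 2 / q) * uhat m c p tinv (c * t₀ - x t₀ 2) a +
        alpha (c * t₀ - x t₀ 2) a)
    (v : ℝ → ℝ)
    (hv : ∀ ξ : ℝ,
      v ξ = ((q / (m * c ^ 2)) * (K 0 - alpha ξ 0)) ^ 2 +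
        ((q / (m * c ^ 2)) * (K 1 - alpha ξ 1)) ^ 2) :
    ∀ t : ℝ,
      (∀ a : Fin 3, a = 0 ∨ a = 1 →
        uhat m c p tinv (c * t - x t 2) a =
          (q / (m * c ^ 2)) * (K a - alpha (c * t - x t 2) a)) ∧
      HasDerivAt (fun η : ℝ => xhat x tinv η 2)
        ((1 + v (c * t - x t 2)) / (2 * (shat m c p tinv (c * t - x t 2)) ^ 2) - 1 / 2)
        (c * t - x t 2) ∧
      HasDerivAt (fun η : ℝ => m * c ^ 2 * shat m c p tinv η)
        (-(q * Es3 (xhat x tinv (c * t - x t 2) 2)))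
        (c * t - x t 2) :=
  stmt_8_general m c q hm hc hq eps heps hepsi hepsz Es3 E B hE hB x p hxC hsol tinv htinv alpha
    halpha t₀ K hK v hv
end
end
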